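/- arXiv:2409.12802 — 3 statements merged into one kernel-verified Lean document; each statement's English description precedes it below -/
import Mathlib

section
/- Let λ ∈ 𝔥* and let V be a highest weight 𝔤-module with highest weight λ. For every μ ∈ wt_{J_λ} V and every tuple (c_i)_{i ∈ J_λ^c} of nonnegative integers, one has μ − Σ_{i∈J_λ^c} c_i α_i ∈ wt V. More precisely: if F ∈ U(n⁻) is a weight vector with 0 ≠ F·v_λ ∈ V_μ, then F·(∏_{i∈J_λ^c} f_i^{c_i})·v_λ ≠ 0 in V, where the product of the f_i^{c_i} is taken in any fixed order. -/
open scoped BigOperators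

attribute [local instance] Classical.propDecidable

namespace KM

/-- The set of `ℤ≥0`-linear combinations of elements of `S`. -/
def cone {W : Type} [AddCommMonoid W] (S : Set W) : Set W :=
  (AddSubmonoid.closure S : AddSubmonoid W)

/-- Minkowski difference of two sets. -/
def mdiff {W : Type} [Sub W] (A B : Set W) : Set W :=
  {x | ∃ a ∈ A, ∃ b ∈ B, x = a - b}

variable {g : Type} [LieRing g] [LieAlgebra ℂ g]

/-- The `μ`-weight space of a `g`-module `V` with respect to a Cartan subalgebra `H`. -/
def wtSpace (H : LieSubalgebra ℂ g) (V : Type) [AddCommGroup V] [Module ℂ V]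
    [LieRingModule g V] [LieModule ℂ g V] (μ : Module.Dual ℂ H) : Submodule ℂ V where
  carrier := {w | ∀ h : H, ⁅(h : g), w⁆ = μ h • w}
  add_mem' := by
    intro a b ha hb h
    rw [lie_add, ha h, hb h, smul_add]
  zero_mem' := by
    intro h
    rw [lie_zero, smul_zero]
  smul_mem' := by
    intro t w hw h
    rw [lie_smul, hw h, smul_smul, smul_smul, mul_comm]

/-- The set of weights of a `g`-module `V`. -/
def wtSet (H : LieSubalgebra ℂ g) (V : Type) [AddCommGroup V] [Module ℂ V]
    [LieRingModule g V] [LieModule ℂ g V] : Set (Module.Dual ℂ H) :=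
  {μ | wtSpace H V μ ≠ ⊥}

/-- Iterated action `x^n · w` of an element `x : g` on a module vector. -/
def actPow {V : Type} [AddCommGroup V] [LieRingModule g V] (x : g) (n : ℕ) (w : V) : V :=
  (fun u => ⁅x, u⁆)^[n] w

/-- The data of a Kac--Moody Lie algebra `g` attached to a generalized Cartan matrix `A`,
with Cartan subalgebra `H`, simple roots `α`, simple coroots `coroot`, and Chevalley
generators `e`, `f`. -/
structure Data (𝓘 : Type) (g : Type) [LieRing g] [LieAlgebra ℂ g] where
  H : LieSubalgebra ℂ g
  α : 𝓘 → Module.Dual ℂ H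
  coroot : 𝓘 → H
  e : 𝓘 → g
  f : 𝓘 → g
  A : 𝓘 → 𝓘 → ℤ
  pairing_eq : ∀ i j, α i (coroot j) = (A j i : ℂ)
  A_diag : ∀ i, A i i = 2
  A_offdiag : ∀ i j, i ≠ j → A i j ≤ 0
  A_zero_iff : ∀ i j, A i j = 0 ↔ A j i = 0
  indepSimple : LinearIndependent ℂ α
  cartan_abelian : ∀ h h' : H, ⁅(h : g), (h' : g)⁆ = 0
  lie_h_e : ∀ (h : H) (i : 𝓘), ⁅(h : g), e i⁆ = α i h • e i
  lie_h_f : ∀ (h : H) (i : 𝓘), ⁅(h : g), f i⁆ = -(α i h) • f i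
  lie_e_f_same : ∀ i, ⁅e i, f i⁆ = (coroot i : g)
  lie_e_f_ne : ∀ i j, i ≠ j → ⁅e i, f j⁆ = 0
  serre_e : ∀ i j, i ≠ j → ((LieAlgebra.ad ℂ g (e i)) ^ (1 - A i j).toNat) (e j) = 0
  serre_f : ∀ i j, i ≠ j → ((LieAlgebra.ad ℂ g (f i)) ^ (1 - A i j).toNat) (f j) = 0
  generates : LieSubalgebra.lieSpan ℂ g ((H : Set g) ∪ Set.range e ∪ Set.range f) = ⊤
  rootDecomp : (⨆ μ : Module.Dual ℂ H, wtSpace H g μ) = ⊤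
  zeroWtSpace : wtSpace H g (0 : Module.Dual ℂ H) = H.toSubmodule
  root_pm : ∀ μ : Module.Dual ℂ H, μ ≠ 0 → wtSpace H g μ ≠ ⊥ →
      μ ∈ cone (Set.range α) ∨ -μ ∈ cone (Set.range α)

variable {𝓘 : Type}

/-- `V` is a highest weight `g`-module with highest weight `lam` and highest weight
vector `v`; equivalently, `V` is a nonzero quotient of the Verma module `M(lam)`. -/
def IsHW (D : Data 𝓘 g) (V : Type) [AddCommGroup V] [Module ℂ V] [LieRingModule g V]
    [LieModule ℂ g V] (lam : Module.Dual ℂ D.H) (v : V) : Prop :=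
  v ≠ 0 ∧ v ∈ wtSpace D.H V lam ∧ (∀ i : 𝓘, ⁅D.e i, v⁆ = 0) ∧
    LieSubmodule.lieSpan ℂ g {v} = ⊤

/-- `J_λ`, the set of integrable directions of `lam`. -/
def Jlam (D : Data 𝓘 g) (lam : Module.Dual ℂ D.H) : Set 𝓘 :=
  {i | ∃ n : ℕ, lam (D.coroot i) = (n : ℂ)}

/-- `Π_J`, the simple roots indexed by `J`. -/
def PiJ (D : Data 𝓘 g) (J : Set 𝓘) : Set (Module.Dual ℂ D.H) := D.α '' J

/-- The root system `Δ` of `g`. -/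
def roots (D : Data 𝓘 g) : Set (Module.Dual ℂ D.H) :=
  {μ | μ ≠ 0 ∧ wtSpace D.H g μ ≠ ⊥}

/-- The positive roots `Δ⁺`. -/
def posRoots (D : Data 𝓘 g) : Set (Module.Dual ℂ D.H) :=
  roots D ∩ cone (Set.range D.α)

/-- The positive roots `Δ⁺_J` of the parabolic subroot system `Δ_J = Δ ∩ ℤΠ_J`. -/
def posRootsJ (D : Data 𝓘 g) (J : Set 𝓘) : Set (Module.Dual ℂ D.H) :=
  posRoots D ∩ (Submodule.span ℤ (D.α '' J) : Set (Module.Dual ℂ D.H))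

/-- `wt_J V := wt V ∩ (λ − ℤ≥0 Π_J)`. -/
def wtJ (D : Data 𝓘 g) (V : Type) [AddCommGroup V] [Module ℂ V] [LieRingModule g V]
    [LieModule ℂ g V] (lam : Module.Dual ℂ D.H) (J : Set 𝓘) : Set (Module.Dual ℂ D.H) :=
  wtSet D.H V ∩ {μ | ∃ x ∈ cone (PiJ D J), μ = lam - x}

/-- A subset `S` of nodes is independent if its induced Dynkin subdiagram has no edges. -/
def IndepSet (D : Data 𝓘 g) (S : Set 𝓘) : Prop :=
  ∀ i ∈ S, ∀ j ∈ S, i ≠ j → D.α i (D.coroot j) = 0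

/-- `J_V`: the union of all minimal independent subsets `I ⊆ J_λ` with
`λ − Σ_{i∈I} (λ(α_i^∨)+1)α_i ∉ wt V`. -/
def JV (D : Data 𝓘 g) (V : Type) [AddCommGroup V] [Module ℂ V] [LieRingModule g V]
    [LieModule ℂ g V] (lam : Module.Dual ℂ D.H) : Set 𝓘 :=
  {i | ∃ I : Finset 𝓘, (↑I : Set 𝓘) ⊆ Jlam D lam ∧ IndepSet D (↑I : Set 𝓘) ∧
    (lam - ∑ k ∈ I, (lam (D.coroot k) + 1) • D.α k) ∉ wtSet D.H V ∧
    (∀ K : Finset 𝓘, K ⊂ I →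
      (lam - ∑ k ∈ K, (lam (D.coroot k) + 1) • D.α k) ∈ wtSet D.H V) ∧
    i ∈ I}


/-- The action of the universal enveloping algebra `U(g)` on a `g`-module `V`. -/
noncomputable def Uact (g : Type) [LieRing g] [LieAlgebra ℂ g] (V : Type)
    [AddCommGroup V] [Module ℂ V] [LieRingModule g V] [LieModule ℂ g V] :
    UniversalEnvelopingAlgebra ℂ g →ₐ[ℂ] Module.End ℂ V :=
  UniversalEnvelopingAlgebra.lift ℂ (LieModule.toEnd ℂ g V)


end KM

/-!
Every vector of `V` is a combination of monomials `f_{j₁} ⋯ f_{jₖ} · v`, and the weight spaces of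
`V`, as well as those of `U(g)` under `ad 𝔥`, are independent. Hence a weight vector `F ∈ U(n⁻)`
of weight `μ - λ ∈ -ℤ≥0 Π_{J_λ}` is a combination of monomials in the `f_j` with `j ∈ J_λ`, so it
commutes with every `e_i`, `i ∉ J_λ`. For such `i`, `v` is a primitive vector of the `sl₂`-triple
`(α_i^∨, e_i, f_i)` whose eigenvalue `λ(α_i^∨)` is not a natural number, so
`e_i f_i^{n+1} v = (n+1)(λ(α_i^∨) - n) f_i^n v` with a nonzero scalar; as `e_i` commutes with `F`,
`F f_i^{n+1} v = 0` would force `F f_i^n v = 0`. Inducting over `n` and over the directions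
`i ∉ J_λ` (the `f_j`, `j ≠ i`, commute with `e_i`) gives the second claim; applying it to a monomial
of weight `μ - λ` that does not kill `v` gives the first.
-/

open UniversalEnvelopingAlgebra (ι)

theorem Submodule.mem_span_image_of_iSupIndep {R M κ ν : Type*} [Ring R] [AddCommGroup M]
    [Module R M] {p : ν → Submodule R M} (hp : iSupIndep p) {t : κ → M} {w : κ → ν}
    (ht : ∀ k, t k ∈ p (w k)) {c : ν} {x : M} (hx : x ∈ span R (Set.range t))
    (hxc : x ∈ p c) : x ∈ span R (t '' {k | w k = c}) := by
  have hsplit : span R (Set.range t) ≤ span R (t '' {k | w k = c}) ⊔ ⨆ (n) (_ : n ≠ c), p n := by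
    rw [span_le]
    rintro _ ⟨k, rfl⟩
    by_cases hk : w k = c
    · exact mem_sup_left (subset_span ⟨k, hk, rfl⟩)
    · exact mem_sup_right (le_iSup₂ (f := fun n (_ : n ≠ c) => p n) (w k) hk (ht k))
  obtain ⟨y, hy, z, hz, rfl⟩ := mem_sup.1 (hsplit hx)
  have hyc : y ∈ p c := by
    refine span_le.2 ?_ hy
    rintro _ ⟨k, hk, rfl⟩
    exact hk ▸ ht k
  have hz0 : z = 0 := disjoint_def.1 (hp c) z (by simpa using sub_mem hxc hyc) hz
  simpa [hz0] using hy

theorem Module.End.iSupIndep_iInf_eigenspace {K H M : Type*} [Field K] [AddCommGroup H]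
    [Module K H] [AddCommGroup M] [Module K M] (ρ : H → Module.End K M)
    (hρ : ∀ h h', Commute (ρ h) (ρ h')) :
    iSupIndep fun μ : Module.Dual K H => ⨅ h, (ρ h).eigenspace (μ h) :=
  ((independent_iInf_maxGenEigenspace_of_forall_mapsTo ρ fun h h' φ =>
      mapsTo_maxGenEigenspace_of_comm (hρ h' h) φ).comp DFunLike.coe_injective).mono
    fun _ => iInf_mono fun _ => eigenspace_le_maxGenEigenspace

theorem LinearMap.commute_mulLeft_sub_mulRight {R A : Type*} [CommRing R] [Ring A] [Algebra R A]
    {a b : A} (hab : Commute a b) :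
    Commute (mulLeft R a - mulRight R a) (mulLeft R b - mulRight R b) :=
  LinearMap.ext fun X => by
    simp only [Module.End.mul_apply, sub_apply, mulLeft_apply, mulRight_apply, mul_sub, sub_mul,
      ← mul_assoc]
    rw [hab.eq, mul_assoc X a b, hab.eq, ← mul_assoc]
    abel

theorem LinearIndependent.perm_of_sum_map_eq {κ R M : Type*} [Fintype κ] [Semiring R]
    [CharZero R] [AddCommMonoid M] [Module R M] {b : κ → M}
    (hb : LinearIndependent R b) {l l' : List κ} (h : (l.map b).sum = (l'.map b).sum) :
    l.Perm l' := by
  classical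
  have hcount : ∀ l : List κ, (l.map b).sum = ∑ j, (l.count j : R) • b j := fun l => by
    rw [Finset.sum_list_map_count, Finset.sum_subset (Finset.subset_univ _)]
    · simp [Nat.cast_smul_eq_nsmul]
    · intro j _ hj
      simp [List.count_eq_zero_of_not_mem (by simpa using hj)]
  rw [List.perm_iff_count]
  intro j
  exact_mod_cast Fintype.linearIndependent_iffₛ.1 hb (fun j => (l.count j : R))
    (fun j => (l'.count j : R)) (by rw [← hcount, ← hcount, h]) j

theorem LinearIndependent.forall_mem_of_sum_map_mem_closure {κ R M : Type*} [Fintype κ]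
    [Semiring R] [CharZero R] [AddCommMonoid M] [Module R M] {b : κ → M}
    (hb : LinearIndependent R b) {J : Set κ} {l : List κ}
    (hl : (l.map b).sum ∈ AddSubmonoid.closure (b '' J)) : ∀ j ∈ l, j ∈ J := by
  have hlists : ∀ x ∈ AddSubmonoid.closure (b '' J),
      ∃ l' : List κ, (∀ j ∈ l', j ∈ J) ∧ (l'.map b).sum = x := by
    intro x hx
    induction hx using AddSubmonoid.closure_induction with
    | mem x hx =>
      obtain ⟨j, hj, rfl⟩ := hx
      exact ⟨[j], by simpa using hj, by simp⟩
    | zero => exact ⟨[], by simp, by simp⟩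
    | add x y _ _ hx hy =>
      obtain ⟨l₁, hl₁, rfl⟩ := hx
      obtain ⟨l₂, hl₂, rfl⟩ := hy
      exact ⟨l₁ ++ l₂, fun j hj => (List.mem_append.1 hj).elim (hl₁ j) (hl₂ j), by simp⟩
  obtain ⟨l', hl'J, hl'⟩ := hlists _ hl
  exact fun j hj => hl'J j ((hb.perm_of_sum_map_eq hl').mem_iff.2 hj)

theorem lie_mem_of_mem_lieSpan {R L M : Type*} [CommRing R] [LieRing L] [LieAlgebra R L]
    [AddCommGroup M] [Module R M] [LieRingModule L M] [LieModule R L M] {s : Set L}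
    {W : Submodule R M} (hW : ∀ x ∈ s, ∀ w ∈ W, ⁅x, w⁆ ∈ W) {x : L}
    (hx : x ∈ LieSubalgebra.lieSpan R L s) : ∀ w ∈ W, ⁅x, w⁆ ∈ W := by
  induction hx using LieSubalgebra.lieSpan_induction with
  | mem x hx => exact hW x hx
  | zero => simp
  | add x y _ _ hx hy => exact fun w hw => by rw [add_lie]; exact W.add_mem (hx w hw) (hy w hw)
  | smul t x _ hx => exact fun w hw => by rw [smul_lie]; exact W.smul_mem t (hx w hw)
  | lie x y _ _ hx hy =>
    exact fun w hw => by rw [lie_lie]; exact W.sub_mem (hx _ (hy w hw)) (hy _ (hx w hw))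

namespace KM

variable {𝓘 g : Type} [LieRing g] [LieAlgebra ℂ g] {V : Type} [AddCommGroup V] [Module ℂ V]
  [LieRingModule g V] [LieModule ℂ g V]

theorem ι_lie (x y : g) : ι ℂ ⁅x, y⁆ = ι ℂ x * ι ℂ y - ι ℂ y * ι ℂ x := by
  let := LieRing.ofAssociativeRing (A := UniversalEnvelopingAlgebra ℂ g)
  rw [LieHom.map_lie, Ring.lie_def]

theorem commute_ι_of_lie_eq_zero {x y : g} (hxy : ⁅x, y⁆ = 0) : Commute (ι ℂ x) (ι ℂ y) :=
  sub_eq_zero.1 (by rw [← ι_lie, hxy, map_zero])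

theorem Uact_ι_apply (x : g) (w : V) : Uact g V (ι ℂ x) w = ⁅x, w⁆ := by
  rw [Uact, UniversalEnvelopingAlgebra.lift_ι_apply, LieModule.toEnd_apply_apply]

theorem Uact_ι_pow_apply (x : g) (n : ℕ) (w : V) :
    Uact g V (ι ℂ x ^ n) w = (LieModule.toEnd ℂ g V x ^ n) w := by
  rw [map_pow, Uact, UniversalEnvelopingAlgebra.lift_ι_apply]

section WeightSpaces

variable {H : LieSubalgebra ℂ g}

theorem wtSpace_eq_iInf_eigenspace (μ : Module.Dual ℂ H) :
    wtSpace H V μ = ⨅ h : H, (LieModule.toEnd ℂ g V h).eigenspace (μ h) := by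
  ext w
  simp only [Submodule.mem_iInf, Module.End.mem_eigenspace_iff, LieModule.toEnd_apply_apply]
  rfl

theorem iSupIndep_wtSpace (hH : ∀ h h' : H, ⁅(h : g), (h' : g)⁆ = 0) :
    iSupIndep (wtSpace H V) := by
  rw [funext wtSpace_eq_iInf_eigenspace]
  exact Module.End.iSupIndep_iInf_eigenspace _ fun h h' => LinearMap.ext fun w =>
    sub_eq_zero.1 (by simp only [Module.End.mul_apply, LieModule.toEnd_apply_apply, ← lie_lie, hH,
      zero_lie])

theorem eq_of_mem_wtSpace {w : V} (hw : w ≠ 0) {μ μ' : Module.Dual ℂ H}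
    (hμ : w ∈ wtSpace H V μ) (hμ' : w ∈ wtSpace H V μ') : μ = μ' :=
  LinearMap.ext fun h => smul_left_injective ℂ hw ((hμ h).symm.trans (hμ' h))

noncomputable def adWeightSpace (H : LieSubalgebra ℂ g) (ν : Module.Dual ℂ H) :
    Submodule ℂ (UniversalEnvelopingAlgebra ℂ g) :=
  ⨅ h : H, Module.End.eigenspace
    (LinearMap.mulLeft ℂ (ι ℂ (h : g)) - LinearMap.mulRight ℂ (ι ℂ (h : g))) (ν h)

theorem mem_adWeightSpace {ν : Module.Dual ℂ H} {F : UniversalEnvelopingAlgebra ℂ g} :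
    F ∈ adWeightSpace H ν ↔ ∀ h : H, ι ℂ (h : g) * F - F * ι ℂ (h : g) = ν h • F := by
  simp [adWeightSpace, Submodule.mem_iInf]

theorem iSupIndep_adWeightSpace (hH : ∀ h h' : H, ⁅(h : g), (h' : g)⁆ = 0) :
    iSupIndep (adWeightSpace H) :=
  Module.End.iSupIndep_iInf_eigenspace _ fun h h' =>
    LinearMap.commute_mulLeft_sub_mulRight (commute_ι_of_lie_eq_zero (hH h h'))

instance : SetLike.GradedMonoid (adWeightSpace H) where
  one_mem := mem_adWeightSpace.2 fun h => by simp
  mul_mem ν ξ X Y hX hY := mem_adWeightSpace.2 fun h => by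
    rw [mem_adWeightSpace] at hX hY
    calc ι ℂ (h : g) * (X * Y) - X * Y * ι ℂ (h : g)
        = (ι ℂ (h : g) * X - X * ι ℂ (h : g)) * Y + X * (ι ℂ (h : g) * Y - Y * ι ℂ (h : g)) := by
          noncomm_ring
      _ = (ν + ξ) h • (X * Y) := by
          rw [hX h, hY h, smul_mul_assoc, mul_smul_comm, LinearMap.add_apply, add_smul]

theorem ι_mem_adWeightSpace {ν : Module.Dual ℂ H} {x : g} (hx : x ∈ wtSpace H g ν) :
    ι ℂ x ∈ adWeightSpace H ν :=
  mem_adWeightSpace.2 fun h => by rw [← ι_lie, hx h, map_smul]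

theorem Uact_mem_wtSpace {ν ξ : Module.Dual ℂ H} {X : UniversalEnvelopingAlgebra ℂ g}
    (hX : X ∈ adWeightSpace H ν) {w : V} (hw : w ∈ wtSpace H V ξ) :
    Uact g V X w ∈ wtSpace H V (ξ + ν) := fun h => by
  have hXh : ι ℂ (h : g) * X = X * ι ℂ (h : g) + ν h • X := by
    rw [← mem_adWeightSpace.1 hX h]; abel
  calc ⁅(h : g), Uact g V X w⁆ = Uact g V (ι ℂ (h : g) * X) w := by
        rw [map_mul, Module.End.mul_apply, Uact_ι_apply]
    _ = (ξ + ν) h • Uact g V X w := by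
        rw [hXh, map_add, map_mul, map_smul, LinearMap.add_apply, Module.End.mul_apply,
          Uact_ι_apply, hw h, map_smul, LinearMap.smul_apply, LinearMap.add_apply, add_smul]

end WeightSpaces

/-- Applying `e` to `X f^{n+1} · v` gives `(n + 1)(μ - n) • X f^n · v`. -/
theorem _root_.IsSl2Triple.HasPrimitiveVectorWith.Uact_mul_pow_ne_zero {h e f : g}
    {t : IsSl2Triple h e f} {v : V} {μ : ℂ} (P : t.HasPrimitiveVectorWith v μ)
    (hμ : ∀ n : ℕ, μ ≠ n) {X : UniversalEnvelopingAlgebra ℂ g} (hX : Commute (ι ℂ e) X)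
    (hXv : Uact g V X v ≠ 0) (n : ℕ) : Uact g V (X * ι ℂ f ^ n) v ≠ 0 := by
  induction n with
  | zero => simpa using hXv
  | succ n ih =>
    intro hzero
    have hscalar : ((n + 1 : ℂ) * (μ - n)) • Uact g V (X * ι ℂ f ^ n) v = 0 := by
      calc ((n + 1 : ℂ) * (μ - n)) • Uact g V (X * ι ℂ f ^ n) v
          = Uact g V X ⁅e, (LieModule.toEnd ℂ g V f ^ (n + 1)) v⁆ := by
            rw [P.lie_e_pow_succ_toEnd_f, map_smul, map_mul, Module.End.mul_apply, Uact_ι_pow_apply]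
        _ = Uact g V (ι ℂ e) (Uact g V (X * ι ℂ f ^ (n + 1)) v) := by
            rw [← Uact_ι_apply, ← Uact_ι_pow_apply]
            simp only [← Module.End.mul_apply, ← map_mul]
            rw [← mul_assoc, ← mul_assoc, hX.eq]
        _ = 0 := by rw [hzero, map_zero]
    exact ih ((smul_eq_zero.1 hscalar).resolve_left
      (mul_ne_zero (Nat.cast_add_one_ne_zero n) (sub_ne_zero.2 (hμ n))))

namespace Data

variable (D : Data 𝓘 g)

theorem isSl2Triple (i : 𝓘) : IsSl2Triple (D.coroot i : g) (D.e i) (D.f i) where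
  h_ne_zero h0 := by
    have h2 := D.pairing_eq i i
    rw [D.A_diag, ZeroMemClass.coe_eq_zero.1 h0, map_zero] at h2
    norm_num at h2
  lie_e_f := D.lie_e_f_same i
  lie_h_e_nsmul := by rw [D.lie_h_e, D.pairing_eq, D.A_diag]; norm_num [two_smul]
  lie_h_f_nsmul := by rw [D.lie_h_f, D.pairing_eq, D.A_diag]; norm_num [two_smul]

theorem f_mem_wtSpace (i : 𝓘) : D.f i ∈ wtSpace D.H g (-D.α i) := fun h => by
  rw [D.lie_h_f, LinearMap.neg_apply]

theorem commute_ι_e_ι_f {i j : 𝓘} (hij : i ≠ j) : Commute (ι ℂ (D.e i)) (ι ℂ (D.f j)) :=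
  commute_ι_of_lie_eq_zero (D.lie_e_f_ne i j hij)

noncomputable def fMonomial (l : List 𝓘) : UniversalEnvelopingAlgebra ℂ g :=
  (l.map fun j => ι ℂ (D.f j)).prod

theorem fMonomial_cons (j : 𝓘) (l : List 𝓘) :
    D.fMonomial (j :: l) = ι ℂ (D.f j) * D.fMonomial l := by
  simp [fMonomial]

theorem fMonomial_mem_adWeightSpace (l : List 𝓘) :
    D.fMonomial l ∈ adWeightSpace D.H (-(l.map D.α).sum) := by
  have hneg : (l.map fun j => -D.α j).sum = -(l.map D.α).sum := by
    induction l with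
    | nil => simp
    | cons j l ih => simp only [List.map_cons, List.sum_cons, ih, neg_add]
  rw [← hneg]
  exact SetLike.list_prod_map_mem_graded l _ _ fun j _ => ι_mem_adWeightSpace (D.f_mem_wtSpace j)

theorem prod_pow_f_mem_adWeightSpace (c : 𝓘 → ℕ) (l : List 𝓘) :
    (l.map fun i => ι ℂ (D.f i) ^ c i).prod
      ∈ adWeightSpace D.H (l.map fun i => c i • -D.α i).sum :=
  SetLike.list_prod_map_mem_graded l _ _ fun i _ =>
    SetLike.pow_mem_graded _ (ι_mem_adWeightSpace (D.f_mem_wtSpace i))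

theorem fMonomial_mem_adjoin (l : List 𝓘) :
    D.fMonomial l ∈ Algebra.adjoin ℂ (Set.range fun k => ι ℂ (D.f k)) :=
  Subalgebra.list_prod_mem _ fun _ hx => by
    obtain ⟨k, -, rfl⟩ := List.mem_map.1 hx
    exact Algebra.subset_adjoin ⟨k, rfl⟩

theorem adjoin_le_span_fMonomial :
    Subalgebra.toSubmodule (Algebra.adjoin ℂ (Set.range fun k => ι ℂ (D.f k)))
      ≤ Submodule.span ℂ (Set.range D.fMonomial) := by
  rw [Algebra.adjoin_eq_span]
  refine Submodule.span_mono fun X hX => ?_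
  induction hX using Submonoid.closure_induction with
  | mem X hX =>
    obtain ⟨k, rfl⟩ := hX
    exact ⟨[k], by simp [fMonomial]⟩
  | one => exact ⟨[], rfl⟩
  | mul X Y _ _ hX hY =>
    obtain ⟨l, rfl⟩ := hX
    obtain ⟨l', rfl⟩ := hY
    exact ⟨l ++ l', by simp [fMonomial]⟩

theorem commute_ι_e_fMonomial {i : 𝓘} {l : List 𝓘} (hl : ∀ j ∈ l, j ≠ i) :
    Commute (ι ℂ (D.e i)) (D.fMonomial l) :=
  Commute.list_prod_right _ _ fun _ hx => by
    obtain ⟨j, hj, rfl⟩ := List.mem_map.1 hx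
    exact D.commute_ι_e_ι_f (hl j hj).symm

/-- By independence of the weight spaces, `F` is a combination of monomials of weight `-x`, and
these involve only the `f_j` with `j ∈ J`. -/
theorem commute_ι_e_of_mem_adjoin [Fintype 𝓘] {F : UniversalEnvelopingAlgebra ℂ g}
    (hF : F ∈ Algebra.adjoin ℂ (Set.range fun k => ι ℂ (D.f k))) {J : Set 𝓘}
    {x : Module.Dual ℂ D.H} (hx : x ∈ cone (PiJ D J)) (hFx : F ∈ adWeightSpace D.H (-x))
    {i : 𝓘} (hi : i ∉ J) : Commute (ι ℂ (D.e i)) F := by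
  have hspan : F ∈ Submodule.span ℂ (D.fMonomial '' {l | -(l.map D.α).sum = -x}) :=
    Submodule.mem_span_image_of_iSupIndep (iSupIndep_adWeightSpace D.cartan_abelian)
      D.fMonomial_mem_adWeightSpace (D.adjoin_le_span_fMonomial hF) hFx
  have hle : Submodule.span ℂ (D.fMonomial '' {l | -(l.map D.α).sum = -x})
      ≤ Subalgebra.toSubmodule (Subalgebra.centralizer ℂ {ι ℂ (D.e i)}) := by
    rw [Submodule.span_le]
    rintro _ ⟨l, hl, rfl⟩
    have hlJ : ∀ j ∈ l, j ∈ J :=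
      D.indepSimple.forall_mem_of_sum_map_mem_closure (neg_injective hl ▸ hx)
    rw [SetLike.mem_coe, Subalgebra.mem_toSubmodule, Subalgebra.mem_centralizer_iff]
    rintro _ rfl
    exact (D.commute_ι_e_fMonomial fun j hj (hji : j = i) => hi (hji ▸ hlJ j hj)).eq
  exact (Subalgebra.mem_centralizer_iff ℂ).1 (hle hspan) _ rfl

theorem Uact_mul_prod_pow_f_ne_zero {lam : Module.Dual ℂ D.H} {v : V}
    (hv : ∀ i, (D.isSl2Triple i).HasPrimitiveVectorWith v (lam (D.coroot i))) (c : 𝓘 → ℕ)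
    {l : List 𝓘} (hl : l.Nodup) (hlJ : ∀ i ∈ l, i ∉ Jlam D lam)
    {X : UniversalEnvelopingAlgebra ℂ g} (hX : ∀ i ∈ l, Commute (ι ℂ (D.e i)) X)
    (hXv : Uact g V X v ≠ 0) :
    Uact g V (X * (l.map fun i => ι ℂ (D.f i) ^ c i).prod) v ≠ 0 := by
  induction l generalizing X with
  | nil => simpa using hXv
  | cons i l ih =>
    obtain ⟨hil, hl⟩ := List.nodup_cons.1 hl
    rw [List.map_cons, List.prod_cons, ← mul_assoc]
    refine ih hl (fun j hj => hlJ j (List.mem_cons_of_mem i hj)) (fun j hj => ?_)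
      ((hv i).Uact_mul_pow_ne_zero (fun n hn => hlJ i List.mem_cons_self ⟨n, hn⟩)
        (hX i List.mem_cons_self) hXv (c i))
    exact (hX j (List.mem_cons_of_mem i hj)).mul_right
      ((D.commute_ι_e_ι_f fun (hji : j = i) => hil (hji ▸ hj)).pow_right _)

theorem span_range_Uact_fMonomial_eq_top {lam : Module.Dual ℂ D.H} {v : V}
    (hV : IsHW D V lam v) :
    Submodule.span ℂ (Set.range fun l => Uact g V (D.fMonomial l) v) = ⊤ := by
  obtain ⟨-, hv, hve, hspan⟩ := hV
  set W := Submodule.span ℂ (Set.range fun l => Uact g V (D.fMonomial l) v)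
  have hmem (l : List 𝓘) : Uact g V (D.fMonomial l) v ∈ W := Submodule.subset_span ⟨l, rfl⟩
  have hstable (x : g) (hx : ∀ l, ⁅x, Uact g V (D.fMonomial l) v⁆ ∈ W) (w : V) (hw : w ∈ W) :
      ⁅x, w⁆ ∈ W :=
    (Submodule.map_span_le (LieModule.toEnd ℂ g V x) _ W).2 (by rintro _ ⟨l, rfl⟩; exact hx l)
      (Submodule.mem_map_of_mem hw)
  have hf (j : 𝓘) : ∀ w ∈ W, ⁅D.f j, w⁆ ∈ W := hstable _ fun l => by
    rw [← Uact_ι_apply, ← Module.End.mul_apply, ← map_mul, ← fMonomial_cons]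
    exact hmem _
  have hh (h : D.H) : ∀ w ∈ W, ⁅(h : g), w⁆ ∈ W := hstable _ fun l => by
    rw [Uact_mem_wtSpace (D.fMonomial_mem_adWeightSpace l) hv h]
    exact W.smul_mem _ (hmem l)
  have he (i : 𝓘) : ∀ w ∈ W, ⁅D.e i, w⁆ ∈ W := hstable _ fun l => by
    induction l with
    | nil => simp [fMonomial, hve i]
    | cons j l ih =>
      rw [fMonomial_cons, map_mul, Module.End.mul_apply, Uact_ι_apply, leibniz_lie]
      refine W.add_mem ?_ (hf j _ ih)
      obtain rfl | hij := eq_or_ne i j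
      · rw [D.lie_e_f_same]
        exact hh _ _ (hmem l)
      · rw [D.lie_e_f_ne i j hij, zero_lie]
        exact W.zero_mem
  let W' : LieSubmodule ℂ g V :=
    { W with
      lie_mem := fun {x} => lie_mem_of_mem_lieSpan
        (by rintro x ((hx | ⟨i, rfl⟩) | ⟨j, rfl⟩); exacts [hh ⟨x, hx⟩, he i, hf j])
        (D.generates ▸ LieSubalgebra.mem_top x) _ }
  have hvW : v ∈ W := by simpa [fMonomial] using hmem []
  have htop : LieSubmodule.lieSpan ℂ g {v} ≤ W' :=
    LieSubmodule.lieSpan_le.2 (Set.singleton_subset_iff.2 (show v ∈ W' from hvW))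
  rw [hspan] at htop
  exact eq_top_iff.2 fun w _ => htop (LieSubmodule.mem_top w)

theorem exists_fMonomial_of_mem_wtSet {lam μ : Module.Dual ℂ D.H} {v : V} (hV : IsHW D V lam v)
    (hμ : μ ∈ wtSet D.H V) :
    ∃ l, D.fMonomial l ∈ adWeightSpace D.H (μ - lam) ∧ Uact g V (D.fMonomial l) v ≠ 0 := by
  obtain ⟨w, hw, hw0⟩ := (Submodule.ne_bot_iff _).1 hμ
  have hspan := Submodule.mem_span_image_of_iSupIndep (iSupIndep_wtSpace D.cartan_abelian)
    (fun l => Uact_mem_wtSpace (D.fMonomial_mem_adWeightSpace l) hV.2.1)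
    (D.span_range_Uact_fMonomial_eq_top hV ▸ Submodule.mem_top) hw
  by_contra! h
  have hbot : Submodule.span ℂ
      ((fun l => Uact g V (D.fMonomial l) v) '' {l | lam + -(l.map D.α).sum = μ}) = ⊥ := by
    rw [Submodule.span_eq_bot]
    rintro _ ⟨l, hl, rfl⟩
    exact h l (eq_sub_of_add_eq' hl ▸ D.fMonomial_mem_adWeightSpace l)
  exact hw0 ((Submodule.mem_bot ℂ).1 (hbot ▸ hspan))

end Data

theorem IsHW.hasPrimitiveVectorWith {D : Data 𝓘 g} {lam : Module.Dual ℂ D.H} {v : V}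
    (hV : IsHW D V lam v) (i : 𝓘) :
    (D.isSl2Triple i).HasPrimitiveVectorWith v (lam (D.coroot i)) :=
  ⟨hV.1, hV.2.1 (D.coroot i), hV.2.2.1 i⟩

theorem free_directions_Jlamc_module_level_general
    {𝓘 : Type} [Fintype 𝓘] {g : Type} [LieRing g] [LieAlgebra ℂ g]
    (D : Data 𝓘 g)
    (V : Type) [AddCommGroup V] [Module ℂ V] [LieRingModule g V] [LieModule ℂ g V]
    (lam : Module.Dual ℂ D.H) (v : V) (hV : IsHW D V lam v)
    (μ : Module.Dual ℂ D.H) (hμ : μ ∈ wtJ D V lam (Jlam D lam)) (c : 𝓘 → ℕ) :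
    (μ - ∑ i ∈ Finset.univ.filter (fun i => i ∉ Jlam D lam), (c i : ℂ) • D.α i
        ∈ wtSet D.H V) ∧
      (∀ F : UniversalEnvelopingAlgebra ℂ g,
        F ∈ Algebra.adjoin ℂ (Set.range fun k => UniversalEnvelopingAlgebra.ι ℂ (D.f k)) →
        (∃ ν : Module.Dual ℂ D.H, ∀ h : D.H,
          UniversalEnvelopingAlgebra.ι ℂ (h : g) * F
              - F * UniversalEnvelopingAlgebra.ι ℂ (h : g) = ν h • F) →
        Uact g V F v ≠ 0 → Uact g V F v ∈ wtSpace D.H V μ →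
        ∀ l : List 𝓘, l.Nodup → (∀ i : 𝓘, i ∈ l ↔ i ∉ Jlam D lam) →
          Uact g V
            (F * (l.map fun i => UniversalEnvelopingAlgebra.ι ℂ (D.f i) ^ (c i)).prod)
            v ≠ 0) := by
  obtain ⟨hμwt, x, hx, rfl⟩ := hμ
  have hfree : ∀ F ∈ Algebra.adjoin ℂ (Set.range fun k => ι ℂ (D.f k)),
      F ∈ adWeightSpace D.H (lam - x - lam) → Uact g V F v ≠ 0 →
      ∀ l : List 𝓘, l.Nodup → (∀ i ∈ l, i ∉ Jlam D lam) →
        Uact g V (F * (l.map fun i => ι ℂ (D.f i) ^ c i).prod) v ≠ 0 := by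
    intro F hF hFx hFv l hl hlJ
    rw [sub_sub_cancel_left] at hFx
    exact D.Uact_mul_prod_pow_f_ne_zero hV.hasPrimitiveVectorWith c hl hlJ
      (fun i hi => D.commute_ι_e_of_mem_adjoin hF hx hFx (hlJ i hi)) hFv
  refine ⟨?_, fun F hF ⟨ν, hν⟩ hFv hFμ l hl hlJ => ?_⟩
  · obtain ⟨m, hmx, hm0⟩ := D.exists_fMonomial_of_mem_wtSet hV hμwt
    set l := (Finset.univ.filter fun i => i ∉ Jlam D lam).toList
    have hwt := Uact_mem_wtSpace
      (SetLike.mul_mem_graded hmx (D.prod_pow_f_mem_adWeightSpace c l)) hV.2.1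
    refine (Submodule.ne_bot_iff _).2 ⟨_, ?_, hfree _ (D.fMonomial_mem_adjoin m) hmx hm0 l
      (Finset.nodup_toList _) fun i hi => (Finset.mem_filter.1 (Finset.mem_toList.1 hi)).2⟩
    convert hwt using 2
    simp only [l, Finset.sum_map_toList, Nat.cast_smul_eq_nsmul, smul_neg, Finset.sum_neg_distrib]
    abel
  · have hFν : F ∈ adWeightSpace D.H ν := mem_adWeightSpace.2 hν
    obtain rfl : ν = lam - x - lam :=
      eq_sub_of_add_eq' (eq_of_mem_wtSpace hFv (Uact_mem_wtSpace hFν hV.2.1) hFμ)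
    exact hfree F hF hFν hFv l hl fun i hi => (hlJ i).1 hi

/-- Lemma 3.2: for every `μ ∈ wt_{J_λ} V` and every tuple
`(c_i)_{i∈J_λ^c}` of nonnegative integers, `μ − Σ_{i∈J_λ^c} c_i α_i ∈ wt V`.
More precisely, if `F ∈ U(n⁻)` is a weight vector with `0 ≠ F·v_λ ∈ V_μ`, then
`F·(∏_{i∈J_λ^c} f_i^{c_i})·v_λ ≠ 0`, the product being taken in any fixed order. -/
theorem free_directions_Jlamc_module_level
    {𝓘 : Type} [Fintype 𝓘] [DecidableEq 𝓘] {g : Type} [LieRing g] [LieAlgebra ℂ g]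
    (D : Data 𝓘 g)
    (V : Type) [AddCommGroup V] [Module ℂ V] [LieRingModule g V] [LieModule ℂ g V]
    (lam : Module.Dual ℂ D.H) (v : V) (hV : IsHW D V lam v)
    (μ : Module.Dual ℂ D.H) (hμ : μ ∈ wtJ D V lam (Jlam D lam)) (c : 𝓘 → ℕ) :
    (μ - ∑ i ∈ Finset.univ.filter (fun i => i ∉ Jlam D lam), (c i : ℂ) • D.α i
        ∈ wtSet D.H V) ∧
      (∀ F : UniversalEnvelopingAlgebra ℂ g,
        F ∈ Algebra.adjoin ℂ (Set.range fun k => UniversalEnvelopingAlgebra.ι ℂ (D.f k)) →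
        (∃ ν : Module.Dual ℂ D.H, ∀ h : D.H,
          UniversalEnvelopingAlgebra.ι ℂ (h : g) * F
              - F * UniversalEnvelopingAlgebra.ι ℂ (h : g) = ν h • F) →
        Uact g V F v ≠ 0 → Uact g V F v ∈ wtSpace D.H V μ →
        ∀ l : List 𝓘, l.Nodup → (∀ i : 𝓘, i ∈ l ↔ i ∉ Jlam D lam) →
          Uact g V
            (F * (l.map fun i => UniversalEnvelopingAlgebra.ι ℂ (D.f i) ^ (c i)).prod)
            v ≠ 0) :=
  free_directions_Jlamc_module_level_general D V lam v hV μ hμ c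

end KM
end

section
/- Let N ∈ ℤ_{≥0}, let i ∈ 𝓘, and let J ⊆ 𝓘 be an independent subset with ⟨α_i, α_j^∨⟩ ≤ 0 for all j ∈ J. Then for any integers c_j with c_j > −N⟨α_i, α_j^∨⟩ for each j ∈ J, the following holds in U(𝔤): (∏_{j∈J} f_j^{c_j})·f_i^N ∈ U(n⁻)·(∏_{j∈J} f_j^{c_j + N⟨α_i, α_j^∨⟩}). (The products over J are unambiguous since the f_j for j ∈ J pairwise commute.) -/
/-!
In an associative algebra `a ^ n * b = ∑ m, (n choose m) • (ad a) ^ m b * a ^ (n - m)`, so if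
`(ad a) ^ (B + 1) b = 0` only the terms with `m ≤ B` survive, and `a ^ (B + d) * b ∈ S ∙ a ^ d`
for every subalgebra `S` containing `a` and `b`. For `a = f_j`, `b = f_i` this applies with
`B = -⟨α_i, α_j^∨⟩` by the Serre relation. For `j ∈ J` the `f_j` commute, hence so do their
adjoint actions, and the vanishing `(ad f_j) ^ (B_j + 1) y = 0` survives replacing `y` by
`(ad f_{j'}) ^ m y`; so `f_i` can be pushed through `∏ f_j ^ (B_j + d_j)` at the cost of `B_j`
in each exponent. Doing this `N` times proves the lemma.
-/

open scoped BigOperators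

attribute [local instance] Classical.propDecidable

section Straightening

open LieAlgebra Submodule

attribute [local instance] LieRing.ofAssociativeRing LieAlgebra.ofAssociativeAlgebra

variable {k R : Type*} [CommRing k] [Ring R] [Algebra k R]

theorem LieHom.map_ad_pow {L L' : Type*} [LieRing L] [LieAlgebra k L] [LieRing L']
    [LieAlgebra k L'] (f : L →ₗ⁅k⁆ L') (x y : L) (n : ℕ) :
    f ((ad k L x ^ n) y) = (ad k L' (f x) ^ n) (f y) := by
  induction n with
  | zero => rfl
  | succ n ih => rw [pow_succ', pow_succ', Module.End.mul_apply, Module.End.mul_apply, ad_apply,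
      ad_apply, f.map_lie, ih]

theorem UniversalEnvelopingAlgebra.commute_ι_of_lie_eq_zero {L : Type*} [LieRing L]
    [LieAlgebra k L] {x y : L} (h : ⁅x, y⁆ = 0) : Commute (ι k x) (ι k y) := by
  have hι := (ι k).map_lie x y
  rwa [h, map_zero, Ring.lie_def, eq_comm, sub_eq_zero] at hι

theorem pow_mul_eq_sum_ad_pow_mul (a b : R) (n : ℕ) :
    a ^ n * b =
      ∑ m ∈ Finset.range (n + 1), n.choose m • ((ad k R a ^ m) b * a ^ (n - m)) := by
  have hL : LinearMap.mulLeft k a = ad k R a + LinearMap.mulRight k a := by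
    rw [ad_eq_lmul_left_sub_lmul_right, Pi.sub_apply, sub_add_cancel]
  have hc : Commute (ad k R a) (LinearMap.mulRight k a) := by
    rw [ad_eq_lmul_left_sub_lmul_right, Pi.sub_apply]
    exact (LinearMap.commute_mulLeft_right a a).sub_left (Commute.refl _)
  calc a ^ n * b = (LinearMap.mulLeft k a ^ n) b := by rw [LinearMap.pow_mulLeft]; rfl
    _ = _ := by
      rw [hL, hc.add_pow, LinearMap.sum_apply]
      refine Finset.sum_congr rfl fun m _ => ?_
      rw [Module.End.mul_apply, Module.End.natCast_apply, Module.End.mul_apply,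
        ← Module.End.mul_apply, (hc.pow_pow m (n - m)).eq, Module.End.mul_apply,
        LinearMap.pow_mulRight, LinearMap.mulRight_apply, map_nsmul, smul_mul_assoc]

theorem ad_pow_apply_mem {S : Subalgebra k R} {a y : R} (ha : a ∈ S) (hy : y ∈ S) (m : ℕ) :
    (ad k R a ^ m) y ∈ S := by
  induction m with
  | zero => exact hy
  | succ m ih =>
    rw [pow_succ', Module.End.mul_apply, ad_apply, Ring.lie_def]
    exact sub_mem (mul_mem ha ih) (mul_mem ih ha)

theorem mul_pow_add_mul_mem_span {S : Subalgebra k R} {a y p q : R} {B : ℕ} (d : ℕ)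
    (ha : a ∈ S) (haq : Commute a q) (hy : (ad k R a ^ (B + 1)) y = 0)
    (hp : ∀ m ≤ B, p * (ad k R a ^ m) y ∈ span S {q}) :
    p * (a ^ (B + d) * y) ∈ span S {q * a ^ d} := by
  rw [pow_mul_eq_sum_ad_pow_mul (k := k), Finset.mul_sum]
  refine sum_mem fun m _ => ?_
  rw [mul_smul_comm]
  refine nsmul_mem ?_ _
  rcases le_or_gt m B with hmB | hBm
  · obtain ⟨s, hs⟩ := mem_span_singleton.mp (hp m hmB)
    refine mem_span_singleton.mpr ⟨s * ⟨a ^ (B - m), pow_mem ha _⟩, ?_⟩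
    have hs' : (s : R) * q = p * (ad k R a ^ m) y := hs
    calc (s : R) * a ^ (B - m) * (q * a ^ d) = s * (a ^ (B - m) * q) * a ^ d := by
          simp only [mul_assoc]
      _ = s * q * a ^ (B - m + d) := by
          rw [(haq.pow_left _).eq, pow_add]; simp only [mul_assoc]
      _ = p * ((ad k R a ^ m) y * a ^ (B + d - m)) := by
          rw [hs', Nat.sub_add_comm hmB, mul_assoc]
  · rw [Module.End.pow_map_zero_of_le hBm hy, zero_mul, mul_zero]
    exact zero_mem _

theorem list_prod_pow_add_mul_mem_span {ι : Type*} {S : Subalgebra k R} (a : ι → R)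
    (B d : ι → ℕ) {l : List ι} (hl : l.Pairwise fun j j' => Commute (a j) (a j'))
    (ha : ∀ j ∈ l, a j ∈ S) {y : R} (hyS : y ∈ S)
    (hy : ∀ j ∈ l, (ad k R (a j) ^ (B j + 1)) y = 0) :
    (l.map fun j => a j ^ (B j + d j)).prod * y ∈ span S {(l.map fun j => a j ^ d j).prod} := by
  induction l generalizing y with
  | nil => simpa using mem_span_singleton.mpr ⟨⟨y, hyS⟩, mul_one y⟩
  | cons j₀ t ih =>
    obtain ⟨hj₀t, ht⟩ := List.pairwise_cons.mp hl
    have hcomm : ∀ e : ι → ℕ, Commute (a j₀) ((t.map fun j => a j ^ e j).prod) := fun e =>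
      Commute.list_prod_right _ _ fun _ hx => by
        obtain ⟨j, hj, rfl⟩ := List.mem_map.mp hx
        exact (hj₀t j hj).pow_right _
    have hj₀ := List.mem_cons_self (a := j₀) (l := t)
    have hkill : ∀ m, ∀ j ∈ t, (ad k R (a j) ^ (B j + 1)) ((ad k R (a j₀) ^ m) y) = 0 :=
      fun m j hj => by
        rw [← Module.End.mul_apply, ((commute_ad_of_commute (hj₀t j hj).symm).pow_pow _ _).eq,
          Module.End.mul_apply, hy j (List.mem_cons_of_mem _ hj), map_zero]
    have hstep := mul_pow_add_mul_mem_span (d j₀) (ha j₀ hj₀) (hcomm d) (hy j₀ hj₀)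
      fun m _ => ih ht (fun j hj => ha j (List.mem_cons_of_mem _ hj))
        (ad_pow_apply_mem (ha j₀ hj₀) hyS m) (hkill m)
    rw [List.map_cons, List.prod_cons, List.map_cons, List.prod_cons,
      ((hcomm fun j => B j + d j).pow_left _).eq, ((hcomm d).pow_left _).eq, mul_assoc]
    exact hstep

theorem list_prod_pow_mul_pow_mem_span {ι : Type*} {S : Subalgebra k R} (a : ι → R)
    (B : ι → ℕ) {l : List ι} (hl : l.Pairwise fun j j' => Commute (a j) (a j'))
    (ha : ∀ j ∈ l, a j ∈ S) {x : R} (hxS : x ∈ S)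
    (hx : ∀ j ∈ l, (ad k R (a j) ^ (B j + 1)) x = 0) (N : ℕ) (d : ι → ℕ) :
    (l.map fun j => a j ^ (N * B j + d j)).prod * x ^ N ∈
      span S {(l.map fun j => a j ^ d j).prod} := by
  induction N generalizing d with
  | zero => simp [mem_span_singleton_self]
  | succ N ih =>
    obtain ⟨s, hs⟩ := mem_span_singleton.mp
      (list_prod_pow_add_mul_mem_span a B (fun j => N * B j + d j) hl ha hxS hx)
    have hexp : ∀ j, (N + 1) * B j + d j = B j + (N * B j + d j) := fun j => by ring
    simp only [hexp, pow_succ', ← mul_assoc]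
    rw [← hs, smul_mul_assoc]
    exact smul_mem _ _ (ih d)

end Straightening

namespace KM

open LieAlgebra UniversalEnvelopingAlgebra Submodule

attribute [local instance] LieRing.ofAssociativeRing LieAlgebra.ofAssociativeAlgebra

variable {𝓘 g : Type} [LieRing g] [LieAlgebra ℂ g]

theorem IndepSet.A_eq_zero {D : Data 𝓘 g} {J : Set 𝓘} (hJ : IndepSet D J) {j k : 𝓘}
    (hj : j ∈ J) (hk : k ∈ J) (hjk : j ≠ k) : D.A j k = 0 := by
  have h := hJ k hk j hj hjk.symm
  rwa [D.pairing_eq, Int.cast_eq_zero] at h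

theorem IndepSet.commute_ι_f {D : Data 𝓘 g} {J : Set 𝓘} (hJ : IndepSet D J) {j k : 𝓘}
    (hj : j ∈ J) (hk : k ∈ J) : Commute (ι ℂ (D.f j)) (ι ℂ (D.f k)) := by
  rcases eq_or_ne j k with rfl | hjk
  · exact Commute.refl _
  · refine commute_ι_of_lie_eq_zero ?_
    simpa [hJ.A_eq_zero hj hk hjk] using D.serre_f j k hjk

theorem Data.ad_ι_f_pow_ι_f_eq_zero (D : Data 𝓘 g) {i j : 𝓘} (hji : j ≠ i)
    (hA : D.A j i ≤ 0) :
    (ad ℂ _ (ι ℂ (D.f j)) ^ ((-D.A j i).toNat + 1)) (ι ℂ (D.f i)) = 0 := by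
  rw [← LieHom.map_ad_pow, show (-D.A j i).toNat + 1 = (1 - D.A j i).toNat by omega,
    D.serre_f j i hji, map_zero]

theorem serre_straightening_lemma_general
    {𝓘 : Type} {g : Type} [LieRing g] [LieAlgebra ℂ g]
    (D : Data 𝓘 g) (N : ℕ) (i : 𝓘) (J : Set 𝓘)
    (hJind : IndepSet D J)
    (hneg : ∀ j ∈ J, D.A j i ≤ 0)
    (c : 𝓘 → ℕ) (hc : ∀ j ∈ J, -((N : ℤ) * D.A j i) < (c j : ℤ))
    (l : List 𝓘) (hlJ : ∀ j : 𝓘, j ∈ l ↔ j ∈ J) :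
    ∃ u ∈ Algebra.adjoin ℂ (Set.range fun k => UniversalEnvelopingAlgebra.ι ℂ (D.f k)),
      (l.map fun j => UniversalEnvelopingAlgebra.ι ℂ (D.f j) ^ (c j)).prod *
          UniversalEnvelopingAlgebra.ι ℂ (D.f i) ^ N =
        u * (l.map fun j =>
          UniversalEnvelopingAlgebra.ι ℂ (D.f j) ^ ((c j : ℤ) + (N : ℤ) * D.A j i).toNat).prod := by
  let F : 𝓘 → UniversalEnvelopingAlgebra ℂ g := fun k => ι ℂ (D.f k)
  let B : 𝓘 → ℕ := fun j => (-D.A j i).toNat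
  let d : 𝓘 → ℕ := fun j => ((c j : ℤ) + N * D.A j i).toNat
  have hiJ : i ∉ J := fun hi => by have := hneg i hi; rw [D.A_diag] at this; omega
  have hc_eq : ∀ j ∈ l, c j = N * B j + d j := fun j hj => by
    have hj := (hlJ j).1 hj
    have hB : (B j : ℤ) = -D.A j i := Int.toNat_of_nonneg (by linarith [hneg j hj])
    have hd : (d j : ℤ) = c j + N * D.A j i := Int.toNat_of_nonneg (by linarith [hc j hj])
    zify
    rw [hB, hd]
    ring
  obtain ⟨s, hs⟩ := mem_span_singleton.mp <| list_prod_pow_mul_pow_mem_span F B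
    (List.pairwise_of_forall_mem_list fun j hj k hk =>
      hJind.commute_ι_f ((hlJ j).1 hj) ((hlJ k).1 hk))
    (fun j _ => Algebra.subset_adjoin (Set.mem_range_self j))
    (Algebra.subset_adjoin (Set.mem_range_self i))
    (fun j hj => D.ad_ι_f_pow_ι_f_eq_zero (ne_of_mem_of_not_mem ((hlJ j).1 hj) hiJ)
      (hneg j ((hlJ j).1 hj))) N d
  refine ⟨s, s.2, ?_⟩
  have hprod : (l.map fun j => F j ^ c j).prod = (l.map fun j => F j ^ (N * B j + d j)).prod :=
    congrArg List.prod (List.map_congr_left fun j hj => by rw [← hc_eq j hj])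
  rw [hprod, ← hs]
  rfl

/-- Lemma 5.4: for `N ∈ ℤ≥0`, `i ∈ 𝓘` and an independent subset
`J ⊆ 𝓘` with `⟨α_i, α_j^∨⟩ ≤ 0` for `j ∈ J`, and integers `c_j > −N⟨α_i, α_j^∨⟩`, one
has, in `U(g)`:  `(∏_{j∈J} f_j^{c_j})·f_i^N ∈ U(n⁻)·(∏_{j∈J} f_j^{c_j+N⟨α_i,α_j^∨⟩})`.
(The set `J` is enumerated by a list `l`; the products are unambiguous since the `f_j`,
`j ∈ J`, pairwise commute.) -/
theorem serre_straightening_lemma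
    {𝓘 : Type} [Fintype 𝓘] [DecidableEq 𝓘] {g : Type} [LieRing g] [LieAlgebra ℂ g]
    (D : Data 𝓘 g) (N : ℕ) (i : 𝓘) (J : Set 𝓘)
    (hJind : IndepSet D J)
    (hneg : ∀ j ∈ J, D.A j i ≤ 0)
    (c : 𝓘 → ℕ) (hc : ∀ j ∈ J, -((N : ℤ) * D.A j i) < (c j : ℤ))
    (l : List 𝓘) (hl : l.Nodup) (hlJ : ∀ j : 𝓘, j ∈ l ↔ j ∈ J) :
    ∃ u ∈ Algebra.adjoin ℂ (Set.range fun k => UniversalEnvelopingAlgebra.ι ℂ (D.f k)),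
      (l.map fun j => UniversalEnvelopingAlgebra.ι ℂ (D.f j) ^ (c j)).prod *
          UniversalEnvelopingAlgebra.ι ℂ (D.f i) ^ N =
        u * (l.map fun j =>
          UniversalEnvelopingAlgebra.ι ℂ (D.f j) ^ ((c j : ℤ) + (N : ℤ) * D.A j i).toNat).prod :=
  serre_straightening_lemma_general D N i J hJind hneg c hc l hlJ

end KM
end

section
/- Let A be an associative unital (not necessarily commutative) ring, let f_1, …, f_n, x ∈ A, and let b_1, …, b_n ∈ ℤ_{≥0}. Then f_n^{b_n} ⋯ f_1^{b_1} · x = Σ_{t_n=0}^{b_n} ⋯ Σ_{t_1=0}^{b_1} (∏_{j=1}^{n} C(b_j, t_j)) · (ad_{f_n}^{∘t_n} ∘ ⋯ ∘ ad_{f_1}^{∘t_1})(x) · f_n^{b_n−t_n} ⋯ f_1^{b_1−t_1}, where ad_f(y) := f·y − y·f, ad_f^{∘t} denotes the t-fold iterate, and C(b, t) is the binomial coefficient. -/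
/-!
Left multiplication by `f` is `ad_f + R_f`, where `R_f` is right multiplication by `f`, and the two
summands commute; the binomial theorem therefore gives `f^b x = Σ_t C(b,t) ad_f^t(x) f^(b-t)`.
The general identity follows by induction on `n`: move `f_1^{b_1}` past `x` in this way, then
apply the induction hypothesis for `f_2, …, f_n` to each `ad_{f_1}^{t_1}(x)`.
-/

open scoped BigOperators

namespace KM

/-- The commutator derivation `ad_f(y) = f·y − y·f` in an associative ring. -/
def adA {A : Type*} [Ring A] (a : A) : A → A := fun y => a * y - y * a

open Finset

lemma adA_eq_mulLeft_sub_mulRight {A : Type*} [Ring A] (f : A) :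
    adA f = ⇑(LinearMap.mulLeft ℤ f - LinearMap.mulRight ℤ f) := rfl

theorem pow_mul_eq_sum_choose_smul_adA_iterate {A : Type*} [Ring A] (f x : A) (b : ℕ) :
    f ^ b * x = ∑ t ∈ range (b + 1), b.choose t • ((adA f)^[t] x * f ^ (b - t)) := by
  set R := LinearMap.mulRight ℤ f
  set D := LinearMap.mulLeft ℤ f - R
  have hDR : Commute D R := (LinearMap.commute_mulLeft_right f f).sub_left (Commute.refl R)
  calc f ^ b * x = ((D + R) ^ b) x := by simp [D]
    _ = ∑ t ∈ range (b + 1), (R ^ (b - t) * D ^ t * (b.choose t : Module.End ℤ A)) x := by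
      simp only [hDR.add_pow, LinearMap.sum_apply, (hDR.pow_pow _ _).eq]
    _ = _ := by
      refine sum_congr rfl fun t _ => ?_
      rw [Module.End.mul_apply, Module.End.mul_apply, Module.End.natCast_apply, map_nsmul,
        map_nsmul, LinearMap.pow_mulRight, LinearMap.mulRight_apply, Module.End.pow_apply,
        adA_eq_mulLeft_sub_mulRight]

lemma prod_map_reverse_ofFn_succ {M : Type*} [Monoid M] {n : ℕ} (g : Fin (n + 1) → M) :
    ((List.ofFn fun j : Fin (n + 1) => j).reverse.map g).prod =
      ((List.ofFn fun i : Fin n => i).reverse.map fun i => g i.succ).prod * g 0 := by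
  simp [List.ofFn_succ, List.map_reverse, List.map_ofFn, Function.comp_def]

lemma foldl_ofFn_succ {α : Type*} {n : ℕ} (F : Fin (n + 1) → α → α) (x : α) :
    (List.ofFn fun j : Fin (n + 1) => j).foldl (fun y j => F j y) x =
      (List.ofFn fun i : Fin n => i).foldl (fun y i => F i.succ y) (F 0 x) := by
  rw [List.ofFn_succ, List.foldl_cons, ← List.foldl_map (f := Fin.succ) (g := fun y j => F j y),
    List.map_ofFn]
  rfl

lemma sum_piFinset_succ {α M : Type*} [AddCommMonoid M] {n : ℕ} (S : Fin (n + 1) → Finset α)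
    (g : (Fin (n + 1) → α) → M) :
    ∑ t ∈ Fintype.piFinset S, g t =
      ∑ a ∈ S 0, ∑ r ∈ Fintype.piFinset (fun i : Fin n => S i.succ), g (Fin.cons a r) := by
  have h := Finset.filter_piFinset_eq_map_consEquiv S (fun _ => True)
  simp only [Finset.filter_true] at h
  rw [h, sum_map, sum_product]
  rfl

/-- identity (5.3): in any associative unital ring `A`, for
`f_1, …, f_n, x ∈ A` and `b_1, …, b_n ∈ ℤ≥0`,
`f_n^{b_n} ⋯ f_1^{b_1} · x
  = Σ_{t_n=0}^{b_n} ⋯ Σ_{t_1=0}^{b_1} (∏_j C(b_j,t_j)) ·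
      (ad_{f_n}^{t_n} ∘ ⋯ ∘ ad_{f_1}^{t_1})(x) · f_n^{b_n−t_n} ⋯ f_1^{b_1−t_1}`. -/
theorem ad_expansion_identity (A : Type*) [Ring A] (n : ℕ) (f : Fin n → A) (x : A)
    (b : Fin n → ℕ) :
    ((List.ofFn fun j : Fin n => j).reverse.map fun j => f j ^ b j).prod * x =
      ∑ t ∈ Fintype.piFinset (fun j : Fin n => Finset.range (b j + 1)),
        (∏ j : Fin n, (b j).choose (t j)) •
          (((List.ofFn fun j : Fin n => j).foldl (fun y j => (adA (f j))^[t j] y) x) *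
            ((List.ofFn fun j : Fin n => j).reverse.map fun j => f j ^ (b j - t j)).prod) := by
  induction n generalizing x with
  | zero => simp
  | succ n ih =>
    rw [prod_map_reverse_ofFn_succ, mul_assoc, pow_mul_eq_sum_choose_smul_adA_iterate, mul_sum,
      sum_piFinset_succ]
    refine sum_congr rfl fun t₀ _ => ?_
    rw [mul_smul_comm, ← mul_assoc, ih (fun i => f i.succ) _ (fun i => b i.succ), sum_mul,
      smul_sum]
    refine sum_congr rfl fun t _ => ?_
    simp only [Fin.prod_univ_succ, Fin.cons_zero, Fin.cons_succ, foldl_ofFn_succ,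
      prod_map_reverse_ofFn_succ, smul_mul_assoc, smul_smul, mul_assoc]

end KM
end
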